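/- The derivative of the matrix inversion map at an invertible matrix S, acting on symmetric matrices, is the linear map H ↦ −S^{-1} H S^{-1}, and for S positive definite symmetric the determinant of this linear map on the space of m×m symmetric matrices has absolute value det(S)^{−(m+1)}. -/

import Mathlib

attribute [local instance] Matrix.normedAddCommGroup Matrix.normedSpace

/-- The linear map `H ↦ −S⁻¹ H S⁻¹` on matrices. -/
noncomputable def invDerivMap {m : ℕ} (S : Matrix (Fin m) (Fin m) ℝ) :
    Matrix (Fin m) (Fin m) ℝ →ₗ[ℝ] Matrix (Fin m) (Fin m) ℝ where
  toFun H := -(S⁻¹ * H * S⁻¹)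
  map_add' H K := by simp [Matrix.mul_add, Matrix.add_mul, add_comm]
  map_smul' c H := by simp [Matrix.mul_smul, Matrix.smul_mul]

/-- The real vector space of m×m real symmetric matrices. -/
def symSubmodule (m : ℕ) : Submodule ℝ (Matrix (Fin m) (Fin m) ℝ) where
  carrier := {A | A.IsSymm}
  add_mem' := fun ha hb => ha.add hb
  zero_mem' := Matrix.isSymm_zero
  smul_mem' := fun c A hA => by
    simpa [Matrix.IsSymm, Matrix.transpose_smul] using congrArg (c • ·) hA

/-! The determinant of `H ↦ P H Pᵀ` on symmetric matrices is multiplicative in `P`, so for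
symmetric `P = U D Uᵀ` with `U` orthogonal it equals the determinant of `H ↦ D H D`. In the
coordinates `H i j` (`i ≤ j`) of a symmetric matrix the latter is diagonal with entries
`d i * d j`, whose product is `(∏ i, d i) ^ (m + 1)` because each index occurs in `m + 1` pairs
`i ≤ j` (counted twice on the diagonal). Taking `P = S⁻¹` and absorbing the sign into the absolute
value gives the determinant formula. -/

open Finset Matrix

theorem Finset.card_filter_le_add_card_filter_ge {ι : Type*} [Fintype ι] [LinearOrder ι] (i : ι) :
    #{j | i ≤ j} + #{j | j ≤ i} = Fintype.card ι + 1 := by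
  have hunion : univ.filter (i ≤ ·) ∪ univ.filter (· ≤ i) = univ := by
    rw [← filter_or]; exact filter_true_of_mem fun j _ => le_total i j
  have hinter : univ.filter (i ≤ ·) ∩ univ.filter (· ≤ i) = {i} := by
    rw [← filter_and]; ext j; simp [le_antisymm_iff, and_comm]
  rw [← card_union_add_card_inter, hunion, hinter, card_univ, card_singleton]

abbrev UpperPairs (ι : Type*) [LE ι] := {p : ι × ι // p.1 ≤ p.2}

theorem prod_upperPairs_mul {ι M : Type*} [Fintype ι] [LinearOrder ι] [CommMonoid M] (d : ι → M) :
    ∏ p : UpperPairs ι, d p.1.1 * d p.1.2 = (∏ i, d i) ^ (Fintype.card ι + 1) := by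
  calc ∏ p : UpperPairs ι, d p.1.1 * d p.1.2
      = ∏ i, ∏ j ∈ {j | i ≤ j}, d i * d j := by
        rw [← prod_subtype {p | p.1 ≤ p.2} (by simp) fun p : ι × ι => d p.1 * d p.2, prod_filter,
          Fintype.prod_prod_type]
        simp only [prod_filter]
    _ = (∏ i, d i ^ #{j | i ≤ j}) * ∏ j, d j ^ #{i | i ≤ j} := by
        simp only [prod_mul_distrib, prod_const]
        rw [prod_comm' (t' := univ) (s' := fun j => {i | i ≤ j}) (by simp)]
        simp only [prod_const]
    _ = ∏ i, d i ^ (#{j | i ≤ j} + #{j | j ≤ i}) := by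
        simp only [pow_add, prod_mul_distrib]
    _ = (∏ i, d i) ^ (Fintype.card ι + 1) := by
        simp only [card_filter_le_add_card_filter_ge, prod_pow]

theorem Matrix.IsSymm.mul_mul_transpose {n R : Type*} [Fintype n] [CommSemiring R]
    {H : Matrix n n R} (hH : H.IsSymm) (P : Matrix n n R) : (P * H * Pᵀ).IsSymm := by
  rw [IsSymm, transpose_mul, transpose_mul, transpose_transpose, hH.eq, Matrix.mul_assoc]

section SymmetricMatrices

variable {m : ℕ}

noncomputable def symCoords (m : ℕ) : symSubmodule m ≃ₗ[ℝ] (UpperPairs (Fin m) → ℝ) where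
  toFun A p := A.1 p.1.1 p.1.2
  map_add' _ _ := rfl
  map_smul' _ _ := rfl
  invFun f := ⟨of fun i j => f ⟨(min i j, max i j), min_le_max⟩,
    IsSymm.ext fun i j => by simp only [of_apply, min_comm, max_comm]⟩
  left_inv A := by
    ext i j
    rcases le_total i j with h | h
    · simp [min_eq_left h, max_eq_right h]
    · simpa [min_eq_right h, max_eq_left h] using A.2.apply i j
  right_inv f := by
    ext p
    simp [min_eq_left p.2, max_eq_right p.2]

@[simp]
theorem symCoords_apply (A : symSubmodule m) (p : UpperPairs (Fin m)) :
    symCoords m A p = (A : Matrix (Fin m) (Fin m) ℝ) p.1.1 p.1.2 := rfl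

def symConj : Matrix (Fin m) (Fin m) ℝ →* Module.End ℝ (symSubmodule m) where
  toFun P :=
    { toFun H := ⟨P * H * Pᵀ, IsSymm.mul_mul_transpose H.2 P⟩
      map_add' H K := Subtype.ext <| by simp [Matrix.mul_add, Matrix.add_mul]
      map_smul' c H := Subtype.ext <| by simp }
  map_one' := by ext; simp
  map_mul' P Q := by ext; simp [Matrix.mul_assoc]

@[simp]
theorem coe_symConj_apply (P : Matrix (Fin m) (Fin m) ℝ) (H : symSubmodule m) :
    (symConj P H : Matrix (Fin m) (Fin m) ℝ) = P * H * Pᵀ := rfl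

theorem det_symConj_mul (P Q : Matrix (Fin m) (Fin m) ℝ) :
    LinearMap.det (symConj (P * Q)) = LinearMap.det (symConj P) * LinearMap.det (symConj Q) := by
  rw [map_mul, map_mul]

theorem symCoords_comp_symConj_diagonal (d : Fin m → ℝ) :
    (symCoords m : symSubmodule m →ₗ[ℝ] _) ∘ₗ symConj (diagonal d) ∘ₗ (symCoords m).symm =
      toLin' (diagonal fun p : UpperPairs (Fin m) => d p.1.1 * d p.1.2) := by
  ext f p
  simp only [LinearMap.comp_apply, LinearEquiv.coe_coe, symCoords_apply, coe_symConj_apply,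
    diagonal_transpose, mul_diagonal, diagonal_mul, toLin'_apply, mulVec_diagonal]
  rw [← symCoords_apply, LinearEquiv.apply_symm_apply, mul_right_comm]

theorem det_symConj_diagonal (d : Fin m → ℝ) :
    LinearMap.det (symConj (diagonal d)) = (∏ i, d i) ^ (m + 1) := by
  rw [← LinearMap.det_conj _ (symCoords m), symCoords_comp_symConj_diagonal, LinearMap.det_toLin',
    det_diagonal, prod_upperPairs_mul, Fintype.card_fin]

theorem det_symConj_of_isSymm {P : Matrix (Fin m) (Fin m) ℝ} (hP : P.IsSymm) :
    LinearMap.det (symConj P) = P.det ^ (m + 1) := by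
  replace hP : P.IsHermitian := isHermitian_iff_isSymm.mpr hP
  set U := (hP.eigenvectorUnitary : Matrix (Fin m) (Fin m) ℝ)
  have hstar : star U = Uᵀ := conjTranspose_eq_transpose_of_trivial U
  have hUUt : U * Uᵀ = 1 := hstar ▸ mem_unitaryGroup_iff.mp hP.eigenvectorUnitary.2
  have hP' : P = U * diagonal hP.eigenvalues * Uᵀ := by
    rw [← hstar]; simpa using hP.spectral_theorem
  have hdetU : LinearMap.det (symConj U) * LinearMap.det (symConj Uᵀ) = 1 := by
    rw [← det_symConj_mul, hUUt, map_one, map_one]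
  rw [hP', det_symConj_mul, det_symConj_mul, det_symConj_diagonal, mul_right_comm, hdetU, one_mul,
    ← hP', hP.det_eq_prod_eigenvalues]
  simp

end SymmetricMatrices

section LinftyOp

/- `HasFDerivAt` depends only on the topology, which the submultiplicative `ℓ∞`-operator norm
shares with the entrywise norm. -/
attribute [local instance] Matrix.linftyOpNormedRing Matrix.linftyOpNormedAlgebra

theorem Matrix.hasFDerivAt_nonsing_inv {𝕜 n : Type*} [NontriviallyNormedField 𝕜] [CompleteSpace 𝕜]
    [Fintype n] [DecidableEq n] {S : Matrix n n 𝕜} (hS : IsUnit S) :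
    HasFDerivAt (fun A : Matrix n n 𝕜 => A⁻¹) (-ContinuousLinearMap.mulLeftRight 𝕜 _ S⁻¹ S⁻¹) S := by
  have : @CompleteSpace (Matrix n n 𝕜) Matrix.linftyOpNormedRing.toUniformSpace :=
    inferInstanceAs (CompleteSpace (n → n → 𝕜))
  simpa [← funext nonsing_inv_eq_ringInverse, hS.unit_spec] using hasFDerivAt_ringInverse hS.unit

end LinftyOp

/-- The derivative of matrix inversion at an invertible S is `H ↦ −S⁻¹ H S⁻¹`; for
S positive definite symmetric, the determinant of this linear map restricted to the
space of symmetric matrices has absolute value `det(S)^{−(m+1)}`. -/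
theorem fderiv_inv_and_det (m : ℕ) (S : Matrix (Fin m) (Fin m) ℝ)
    (hSym : S.IsSymm) (hS : S.PosDef) :
    HasFDerivAt (fun A : Matrix (Fin m) (Fin m) ℝ => A⁻¹)
      (LinearMap.toContinuousLinearMap (invDerivMap S)) S ∧
    ∀ L : symSubmodule m →ₗ[ℝ] symSubmodule m,
      (∀ H : symSubmodule m,
        (L H : Matrix (Fin m) (Fin m) ℝ) = -(S⁻¹ * H * S⁻¹)) →
      |LinearMap.det L| = S.det ^ (-(m + 1 : ℤ)) := by
  refine ⟨hasFDerivAt_nonsing_inv hS.isUnit, fun L hL => ?_⟩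
  have hL' : L = (-1 : ℝ) • symConj S⁻¹ := by
    ext H : 1
    exact Subtype.ext <| by simp [hL, hSym.inv.eq]
  rw [hL', LinearMap.det_smul, abs_mul, abs_pow, abs_neg, abs_one, one_pow, one_mul,
    det_symConj_of_isSymm hSym.inv, det_nonsing_inv, Ring.inverse_eq_inv', abs_pow,
    abs_of_pos (inv_pos.2 hS.det_pos), inv_pow, _root_.zpow_neg]
  norm_cast
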